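/- arXiv:2306.15594 — 2 statements merged into one kernel-verified Lean document; each statement's English description precedes it below -/
import Mathlib

section
/- The infinite product y₀(q) = ∏_{m≥1} (1-q^{2m})⁴(1-q^{7m})⁸ / ((1-q^m)⁸(1-q^{14m})⁴), viewed as a formal power series in q with integer coefficients, satisfies y₀ ≡ 1 (mod 8), i.e., every coefficient of y₀ − 1 is divisible by 8. -/
/-! Since `(1 - a)^2 ≡ 1 - a^2 (mod 2)` and `u ≡ v (mod 2)` implies `u^4 ≡ v^4 (mod 8)`, modulo 8
the factors `(1 - q^m)^8` and `(1 - q^{7m})^8` become `(1 - q^{2m})^4` and `(1 - q^{14m})^4`, so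
numerator and denominator of `y₀` reduce to the same product, whose constant coefficient is `1`.
Comparing coefficients one degree at a time then forces `y₀ ≡ 1`. -/

open PowerSeries Finset

/-- `y₀` is the power series `∏_{m≥1} (1-q^{2m})^4 (1-q^{7m})^8 / ((1-q^m)^8 (1-q^{14m})^4)`,
encoded by clearing denominators and comparing coefficients of partial products. -/
def IsY0 (y0 : PowerSeries ℤ) : Prop :=
  ∀ n : ℕ,
    PowerSeries.coeff n
        (y0 * ∏ m ∈ Finset.range (n + 1),
          ((1 - X ^ (m + 1)) ^ 8 * (1 - X ^ (14 * (m + 1))) ^ 4)) =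
      PowerSeries.coeff n
        (∏ m ∈ Finset.range (n + 1),
          ((1 - X ^ (2 * (m + 1))) ^ 4 * (1 - X ^ (7 * (m + 1))) ^ 8))

theorem one_sub_pow_eight {R : Type*} [CommRing R] (h8 : (8 : R) = 0) (a : R) :
    (1 - a) ^ 8 = (1 - a ^ 2) ^ 4 := by
  have h : (1 - a) ^ 8 - (1 - a ^ 2) ^ 4 = 8 * -(a * (1 + a ^ 2) * (1 - a) ^ 4) := by ring
  rwa [h8, zero_mul, sub_eq_zero] at h

namespace PowerSeries

variable {R : Type*} [CommRing R]

theorem X_pow_succ_dvd_of_coeff_mul_eq_zero {f P : R⟦X⟧} {n : ℕ} (hP : IsUnit (constantCoeff P))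
    (hf : X ^ n ∣ f) (h : coeff n (f * P) = 0) : X ^ (n + 1) ∣ f := by
  obtain ⟨r, rfl⟩ := hf
  have hr : constantCoeff r * constantCoeff P = 0 := by
    rwa [mul_assoc, coeff_X_pow_mul', if_pos le_rfl, Nat.sub_self, coeff_zero_eq_constantCoeff_apply,
      map_mul] at h
  rw [pow_succ]
  exact mul_dvd_mul_left _ (X_dvd_iff.mpr (hP.mul_left_eq_zero.mp hr))

theorem eq_of_forall_coeff_mul_eq {f g : R⟦X⟧} {P : ℕ → R⟦X⟧}
    (hP : ∀ n, IsUnit (constantCoeff (P n))) (h : ∀ n, coeff n (f * P n) = coeff n (g * P n)) :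
    f = g := by
  have hdvd : ∀ n, X ^ n ∣ f - g := by
    intro n
    induction n with
    | zero => exact one_dvd _
    | succ n ih =>
      exact X_pow_succ_dvd_of_coeff_mul_eq_zero (hP n) ih (by rw [sub_mul, map_sub, h, sub_self])
  rw [← sub_eq_zero]
  ext n
  exact X_pow_dvd_iff.mp (hdvd (n + 1)) n n.lt_succ_self

end PowerSeries

theorem y0_congruent_one_mod_eight (y0 : PowerSeries ℤ) (hy : IsY0 y0) :
    ∀ n : ℕ, (8 : ℤ) ∣ PowerSeries.coeff n (y0 - 1) := by
  set φ := Int.castRingHom (ZMod 8)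
  have h8 : (8 : (ZMod 8)⟦X⟧) = 0 := by
    rw [← map_ofNat (C (R := ZMod 8)) 8]
    exact (map_eq_zero_iff _ C_injective).mpr (by decide)
  set A : ℕ → (ZMod 8)⟦X⟧ := fun n =>
    ∏ m ∈ range (n + 1), ((1 - X ^ (2 * (m + 1))) ^ 4 * (1 - X ^ (14 * (m + 1))) ^ 4)
  have hA : ∀ n, IsUnit (constantCoeff (A n)) := by simp [A]
  have hred : ∀ n, coeff n (map φ y0 * A n) = coeff n (1 * A n) := by
    intro n
    have h := congrArg φ (hy n)
    simp only [← coeff_map, map_mul, map_prod, map_pow, map_sub, map_one, map_X] at h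
    have hX : ∀ k, (1 - X ^ k : (ZMod 8)⟦X⟧) ^ 8 = (1 - X ^ (2 * k)) ^ 4 := fun k => by
      rw [one_sub_pow_eight h8, ← pow_mul, mul_comm]
    simp only [hX, ← mul_assoc, Nat.reduceMul] at h
    rwa [one_mul]
  have hmap : map φ y0 = 1 := eq_of_forall_coeff_mul_eq hA hred
  intro n
  refine (ZMod.intCast_zmod_eq_zero_iff_dvd _ 8).mp ?_
  rw [← eq_intCast φ, ← coeff_map, map_sub, hmap, map_one, sub_self, map_zero]
end

section
/- Let D₂(q) = ∏_{m≥1}(1-q^{2m})²/(1-q^m)⁷ = ∑ d₂(n)q^n, and for α ≥ 1 let L_{2α−1}(q) = (1/D₂(q⁷))·∑_{n≥0} d₂(7^{2α−1}n + λ_{2α−1}) q^{n+1}, where λ_{2α−1} = (1+7^{2α−1})/8. Then U₇(L_{2α−1}) = (1/D₂(q))·∑_{n≥0} d₂(7^{2α}n + λ_{2α}) q^{n+1}, where λ_{2α} = (1+7^{2α+1})/8. -/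
open PowerSeries Finset

/-- `d` is the coefficient sequence of `D₂(q) = ∏_{m≥1} (1-q^{2m})^2 / (1-q^m)^7`. -/
def IsD2 (d : ℕ → ℤ) : Prop :=
  ∀ n : ℕ,
    PowerSeries.coeff n
        ((PowerSeries.mk d) * ∏ m ∈ Finset.range (n + 1), (1 - X ^ (m + 1)) ^ 7) =
      PowerSeries.coeff n
        (∏ m ∈ Finset.range (n + 1), (1 - X ^ (2 * (m + 1))) ^ 2)

/-- The operator `U₇`. -/
noncomputable def Uop (ℓ : ℕ) (f : PowerSeries ℤ) : PowerSeries ℤ :=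
  PowerSeries.mk fun n => PowerSeries.coeff (ℓ * n) f

/-- `expand ℓ f` is the series `f(q^ℓ)`. -/
noncomputable def expandPS (ℓ : ℕ) (f : PowerSeries ℤ) : PowerSeries ℤ :=
  PowerSeries.mk fun n => if ℓ ∣ n then PowerSeries.coeff (n / ℓ) f else 0

/-!
Multiplying by a series in `q⁷` commutes with `U₇`: `U₇(f · g(q⁷)) = U₇(f) · g`. Hence
`U₇(L) · D₂ = U₇(L · D₂(q⁷))`, whose coefficients are read off from the defining identity of `L`;
what remains is the index identity `7^k (7m + 6) + λ_k = 7^(k+1) m + λ_(k+2)` for odd `k`.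
-/

theorem filter_dvd_antidiagonal_mul (ℓ n : ℕ) :
    (antidiagonal (ℓ * n)).filter (fun p => ℓ ∣ p.2) =
      (antidiagonal n).image (Prod.map (ℓ * ·) (ℓ * ·)) := by
  ext ⟨i, j⟩
  simp only [mem_filter, HasAntidiagonal.mem_antidiagonal, mem_image, Prod.exists, Prod.map,
    Prod.mk.injEq]
  constructor
  · rintro ⟨hsum, b, rfl⟩
    obtain ⟨a, rfl⟩ : ℓ ∣ i := (Nat.dvd_add_left (dvd_mul_right ℓ b)).mp (hsum ▸ dvd_mul_right ℓ n)
    rcases Nat.eq_zero_or_pos ℓ with rfl | hℓ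
    · exact ⟨n, 0, by simp⟩
    · exact ⟨a, b, Nat.eq_of_mul_eq_mul_left hℓ (by rw [mul_add, hsum]), rfl, rfl⟩
  · rintro ⟨a, b, rfl, rfl, rfl⟩
    exact ⟨(mul_add ℓ a b).symm, dvd_mul_right ℓ b⟩

theorem Uop_mul_expandPS {ℓ : ℕ} (hℓ : ℓ ≠ 0) (f g : PowerSeries ℤ) :
    Uop ℓ (f * expandPS ℓ g) = Uop ℓ f * g := by
  have hinj : Function.Injective (Prod.map (ℓ * ·) (ℓ * ·)) :=
    (mul_right_injective₀ hℓ).prodMap (mul_right_injective₀ hℓ)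
  ext n
  simp only [Uop, expandPS, coeff_mk, coeff_mul, mul_ite, mul_zero, ← sum_filter,
    filter_dvd_antidiagonal_mul, sum_image hinj.injOn]
  simp [Nat.mul_div_cancel_left _ (Nat.pos_of_ne_zero hℓ)]

-- `(1 + 7 ^ k) / 8` is the paper's `λ_k`; the division is exact because `k` is odd.
theorem seven_pow_mul_add_shift {k : ℕ} (hk : Odd k) (m : ℕ) :
    7 ^ k * (7 * (m + 1) - 1) + (1 + 7 ^ k) / 8 = 7 ^ (k + 1) * m + (1 + 7 ^ (k + 2)) / 8 := by
  obtain ⟨c, hc⟩ : 8 ∣ 1 + 7 ^ k := by simpa using hk.nat_add_dvd_pow_add_pow 1 7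
  have hshift : 1 + 7 ^ (k + 2) = 8 * (6 * 7 ^ k + c) := by rw [pow_add]; omega
  rw [hc, hshift, Nat.mul_div_cancel_left _ (by norm_num), Nat.mul_div_cancel_left _ (by norm_num),
    show 7 * (m + 1) - 1 = 7 * m + 6 by omega]
  ring

theorem U7_odd_step_general (d : ℕ → ℤ) (α : ℕ) (hα : 1 ≤ α)
    (L : PowerSeries ℤ)
    (hL : L * expandPS 7 (PowerSeries.mk d) =
      PowerSeries.mk fun n =>
        if n = 0 then 0 else d (7 ^ (2 * α - 1) * (n - 1) + (1 + 7 ^ (2 * α - 1)) / 8)) :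
    Uop 7 L * PowerSeries.mk d =
      PowerSeries.mk fun n =>
        if n = 0 then 0 else d (7 ^ (2 * α) * (n - 1) + (1 + 7 ^ (2 * α + 1)) / 8) := by
  rw [← Uop_mul_expandPS (by norm_num), hL]
  ext (_ | m)
  · simp [Uop]
  · obtain ⟨k, hk⟩ : ∃ k, 2 * α = k + 1 := ⟨2 * α - 1, by omega⟩
    have hodd : Odd k := ⟨α - 1, by omega⟩
    simp only [Uop, coeff_mk, hk, mul_eq_zero, OfNat.ofNat_ne_zero, Nat.add_one_ne_zero, or_self,
      if_false, Nat.add_sub_cancel, seven_pow_mul_add_shift hodd]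

theorem U7_odd_step (d : ℕ → ℤ) (hd : IsD2 d) (α : ℕ) (hα : 1 ≤ α)
    (L : PowerSeries ℤ)
    (hL : L * expandPS 7 (PowerSeries.mk d) =
      PowerSeries.mk fun n =>
        if n = 0 then 0 else d (7 ^ (2 * α - 1) * (n - 1) + (1 + 7 ^ (2 * α - 1)) / 8)) :
    Uop 7 L * PowerSeries.mk d =
      PowerSeries.mk fun n =>
        if n = 0 then 0 else d (7 ^ (2 * α) * (n - 1) + (1 + 7 ^ (2 * α + 1)) / 8) :=
  U7_odd_step_general d α hα L hL
end
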